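/- arXiv:2404.13012 — 2 statements merged into one kernel-verified Lean document; each statement's English description precedes it below -/
import Mathlib

section
/- Let α > 0 and define f: ℂ → ℂ by f(z) = (ln ln |z|)^{1/α}·z/|z| for |z| ≥ e^e and f(z) = e^{−e}·z for |z| < e^e. Then f is a homeomorphism of ℂ onto ℂ, differentiable a.e. with J_f(r e^{iθ}) = α^{−1}·(ln ln r)^{(2−α)/α}·(ln r)^{−1}·r^{−2} > 0 for r > e^e, f satisfies a.e. the equation f_z̄ − (z/z̄)·f_z = K(z)·|J_f(z)|^{1/2} with K(z) = −α^{1/2}·(ln|z|)^{1/2}·(ln ln|z|)^{1/2}·z/z̄ for |z| ≥ e^e and K(z) = −z/z̄ for 0 < |z| < e^e; moreover κ(0,r) = α·ln r·ln ln r for r ≥ e^e, so lim_{r→∞} κ(0,r)/ln r = ∞, while M_f(0,R) = (ln ln R)^{1/α} and consequently lim_{R→∞} M_f(0,R)/(ln R)^{1/α} = 0. -/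
open MeasureTheory Filter Metric

noncomputable section

/-- The Wirtinger derivative `f_z = (f_x - i f_y)/2`, where `f_x`, `f_y` are the
partial derivatives of `f` in the directions `1` and `i`. -/
def wDz (f : ℂ → ℂ) (z : ℂ) : ℂ :=
  (fderiv ℝ f z 1 - Complex.I * fderiv ℝ f z Complex.I) / 2

/-- The Wirtinger derivative `f_z̄ = (f_x + i f_y)/2`. -/
def wDzbar (f : ℂ → ℂ) (z : ℂ) : ℂ :=
  (fderiv ℝ f z 1 + Complex.I * fderiv ℝ f z Complex.I) / 2

/-- The Jacobian `J_f = |f_z|^2 - |f_z̄|^2`. -/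
def jac (f : ℂ → ℂ) (z : ℂ) : ℝ :=
  ‖wDz f z‖ ^ 2 - ‖wDzbar f z‖ ^ 2

/-- The nonlinear Beltrami equation
`f_z̄ - ((z - z0)/conj (z - z0)) f_z = K z0 (z) |J_f(z)|^(1/2)` at the point `z`. -/
def beltramiEq (z0 : ℂ) (K : ℂ → ℂ) (f : ℂ → ℂ) (z : ℂ) : Prop :=
  wDzbar f z - ((z - z0) / (starRingEnd ℂ) (z - z0)) * wDz f z
    = K z * (Real.sqrt |jac f z| : ℂ)

/-- The Luzin N-property: sets of measure zero are mapped to sets of measure zero. -/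
def LuzinN (f : ℂ → ℂ) : Prop :=
  ∀ E : Set ℂ, volume E = 0 → volume (f '' E) = 0

/-- A regular homeomorphic solution of the nonlinear Beltrami equation: a homeomorphism
of `ℂ` onto `ℂ`, differentiable a.e., with `J_f > 0` a.e., possessing the Luzin
N-property, and satisfying the equation a.e. -/
structure IsRegularSolution (z0 : ℂ) (K : ℂ → ℂ) (f : ℂ → ℂ) : Prop where
  homeo : IsHomeomorph f
  diff : ∀ᵐ z ∂(volume : Measure ℂ), DifferentiableAt ℝ f z
  jacPos : ∀ᵐ z ∂(volume : Measure ℂ), 0 < jac f z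
  luzin : LuzinN f
  eqn : ∀ᵐ z ∂(volume : Measure ℂ), beltramiEq z0 K f z

/-- `S_f(z0, r)`: the area of the image of the disk `B(z0, r)`. -/
def Sf (f : ℂ → ℂ) (z0 : ℂ) (r : ℝ) : ℝ := (volume (f '' ball z0 r)).toReal

/-- `κ(z0, r) = (1/(2π)) ∫₀^{2π} |K(z0 + r e^{iθ})|² dθ`. -/
def kappa (K : ℂ → ℂ) (z0 : ℂ) (r : ℝ) : ℝ :=
  (1 / (2 * Real.pi)) *
    ∫ θ in (0 : ℝ)..(2 * Real.pi),
      ‖K (z0 + (r : ℂ) * Complex.exp ((θ : ℂ) * Complex.I))‖ ^ 2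

/-- `M_f(z0, R) = max_{|z - z0| = R} |f z - f z0|`. -/
def Mf (f : ℂ → ℂ) (z0 : ℂ) (R : ℝ) : ℝ :=
  sSup ((fun z => ‖f z - f z0‖) '' sphere z0 R)

/-- `m_f(z0, r) = min_{|z - z0| = r} |f z - f z0|`. -/
def mf (f : ℂ → ℂ) (z0 : ℂ) (r : ℝ) : ℝ :=
  sInf ((fun z => ‖f z - f z0‖) '' sphere z0 r)

/-!
`f` is the radial map `z ↦ ρ(|z|) z/|z|` with profile `ρ(r) = (ln ln r)^{1/α}` for `r ≥ e^e` and
`ρ(r) = e^{-e} r` below. For any radial map one has `f_z = (ρ' + ρ/r)/2` and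
`f_z̄ = (ρ' - ρ/r)/2 · z/z̄`, hence `J_f = ρ ρ'/r` and `f_z̄ - (z/z̄) f_z = -(ρ/r) z/z̄`; so the
Beltrami equation with `|K| = √(α ln r ln ln r)` amounts to `α ln r ln ln r · ρ' = ρ/r`, which is
exactly the logarithmic derivative of `(ln ln r)^{1/α}`. The profile is a continuous increasing
bijection of `[0, ∞)` with inverse `s ↦ exp(exp(s^α))` for `s ≥ 1`, `s ↦ e^e s` below, which makes
`f` a homeomorphism. Both `|K|` and `|f|` are constant on circles, and
`M_f(0,R)/(ln R)^{1/α} = (ln ln R / ln R)^{1/α} → 0`.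
-/

open ComplexConjugate

theorem hasFDerivAt_norm_of_ne_zero {F : Type*} [NormedAddCommGroup F] [InnerProductSpace ℝ F]
    {x : F} (hx : x ≠ 0) : HasFDerivAt (‖·‖) (‖x‖⁻¹ • innerSL ℝ x) x := by
  have hsq : HasDerivAt Real.sqrt (1 / (2 * Real.sqrt (‖x‖ ^ 2))) (‖x‖ ^ 2) :=
    Real.hasDerivAt_sqrt (by positivity)
  have h := hsq.comp_hasFDerivAt x (hasStrictFDerivAt_norm_sq x).hasFDerivAt
  simp only [Function.comp_def, Real.sqrt_sq (norm_nonneg _)] at h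
  refine h.congr_fderiv ?_
  ext y
  simp
  field_simp

def radialMap (ρ : ℝ → ℝ) (z : ℂ) : ℂ := ((ρ ‖z‖ / ‖z‖ : ℝ) : ℂ) * z

section Derivatives

variable {ρ : ℝ → ℝ} {ρ' : ℝ} {z : ℂ}

theorem hasFDerivAt_radialMap (hρ : HasDerivAt ρ ρ' ‖z‖) (hz : z ≠ 0) :
    HasFDerivAt (radialMap ρ)
      (((ρ' * ‖z‖ - ρ ‖z‖) / ‖z‖ ^ 3) • (innerSL ℝ z).smulRight z
        + (ρ ‖z‖ / ‖z‖) • ContinuousLinearMap.id ℝ ℂ) z := by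
  have hr : ‖z‖ ≠ 0 := norm_ne_zero_iff.mpr hz
  have hc : HasDerivAt (fun r => ρ r / r) ((ρ' * ‖z‖ - ρ ‖z‖ * 1) / ‖z‖ ^ 2) ‖z‖ :=
    hρ.div (hasDerivAt_id _) hr
  have h := (Complex.ofRealCLM.hasFDerivAt.comp z
    (hc.comp_hasFDerivAt z (hasFDerivAt_norm_of_ne_zero hz))).mul' (hasFDerivAt_id z)
  refine h.congr_fderiv ?_
  ext v
  simp
  ring

theorem wDz_radialMap (hρ : HasDerivAt ρ ρ' ‖z‖) (hz : z ≠ 0) :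
    wDz (radialMap ρ) z = (((ρ' + ρ ‖z‖ / ‖z‖) / 2 : ℝ) : ℂ) := by
  have hr : (‖z‖ : ℂ) ≠ 0 := by exact_mod_cast norm_ne_zero_iff.mpr hz
  have hzz := Complex.mul_conj' z
  rw [wDz, (hasFDerivAt_radialMap hρ hz).fderiv]
  simp [Complex.re_eq_add_conj, Complex.im_eq_sub_conj]
  field_simp
  linear_combination (2 * ρ' * ‖z‖ - 2 * ρ ‖z‖ : ℂ) * hzz
    - (2 * ‖z‖ ^ 2 * ρ ‖z‖ : ℂ) * Complex.I_sq

theorem wDzbar_radialMap (hρ : HasDerivAt ρ ρ' ‖z‖) (hz : z ≠ 0) :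
    wDzbar (radialMap ρ) z = (((ρ' - ρ ‖z‖ / ‖z‖) / 2 : ℝ) : ℂ) * (z / conj z) := by
  have hr : (‖z‖ : ℂ) ≠ 0 := by exact_mod_cast norm_ne_zero_iff.mpr hz
  have hc : conj z ≠ 0 := by simpa using hz
  have hzz := Complex.mul_conj' z
  rw [wDzbar, (hasFDerivAt_radialMap hρ hz).fderiv]
  simp [Complex.re_eq_add_conj, Complex.im_eq_sub_conj]
  field_simp
  linear_combination (z * (2 * ρ' * ‖z‖ - 2 * ρ ‖z‖)) * hzz
    + (2 * conj z * ‖z‖ ^ 2 * ρ ‖z‖) * Complex.I_sq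

theorem norm_div_conj_self (hz : z ≠ 0) : ‖z / conj z‖ = 1 := by
  rw [norm_div, Complex.norm_conj, div_self (norm_ne_zero_iff.mpr hz)]

theorem jac_radialMap (hρ : HasDerivAt ρ ρ' ‖z‖) (hz : z ≠ 0) :
    jac (radialMap ρ) z = ρ ‖z‖ * ρ' / ‖z‖ := by
  rw [jac, wDz_radialMap hρ hz, wDzbar_radialMap hρ hz, norm_mul, norm_div_conj_self hz,
    Complex.norm_real, Complex.norm_real, Real.norm_eq_abs, Real.norm_eq_abs, mul_one, sq_abs,
    sq_abs]
  ring

theorem wDzbar_sub_mul_wDz_radialMap (hρ : HasDerivAt ρ ρ' ‖z‖) (hz : z ≠ 0) :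
    wDzbar (radialMap ρ) z - z / conj z * wDz (radialMap ρ) z
      = -((ρ ‖z‖ / ‖z‖ : ℝ) : ℂ) * (z / conj z) := by
  rw [wDz_radialMap hρ hz, wDzbar_radialMap hρ hz]
  push_cast
  ring

end Derivatives

section Homeomorphism

variable {ρ σ : ℝ → ℝ}

theorem norm_radialMap {z : ℂ} (hz : z ≠ 0) : ‖radialMap ρ z‖ = |ρ ‖z‖| := by
  rw [radialMap, norm_mul, Complex.norm_real, Real.norm_eq_abs, abs_div, abs_norm,
    div_mul_cancel₀ _ (norm_ne_zero_iff.mpr hz)]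

theorem radialMap_zero : radialMap ρ 0 = 0 := mul_zero _

theorem continuous_radialMap (hρ : Continuous ρ) (hρ₀ : ρ 0 = 0) : Continuous (radialMap ρ) := by
  refine continuous_iff_continuousAt.mpr fun z => ?_
  rcases eq_or_ne z 0 with rfl | hz
  · rw [ContinuousAt, radialMap_zero, tendsto_zero_iff_norm_tendsto_zero]
    have h : Tendsto (fun w : ℂ => |ρ ‖w‖|) (nhds 0) (nhds 0) := by
      simpa [hρ₀] using (hρ.comp continuous_norm).abs.tendsto (0 : ℂ)
    refine squeeze_zero (fun _ => norm_nonneg _) (fun w => ?_) h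
    rcases eq_or_ne w 0 with rfl | hw
    · simp [radialMap_zero]
    · exact (norm_radialMap hw).le
  · have hr : ‖z‖ ≠ 0 := norm_ne_zero_iff.mpr hz
    unfold radialMap
    fun_prop (disch := assumption)

theorem radialMap_leftInverse (hσ : ∀ r, 0 < r → 0 < σ r) (hρσ : ∀ r, 0 < r → ρ (σ r) = r) :
    Function.LeftInverse (radialMap ρ) (radialMap σ) := by
  intro z
  rcases eq_or_ne z 0 with rfl | hz
  · simp [radialMap_zero]
  have hr : 0 < ‖z‖ := norm_pos_iff.mpr hz
  rw [radialMap, norm_radialMap hz, abs_of_pos (hσ _ hr), hρσ _ hr, radialMap, ← mul_assoc,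
    ← Complex.ofReal_mul]
  field_simp [(hσ _ hr).ne']
  simp

theorem isHomeomorph_radialMap (hρ : Continuous ρ) (hσ : Continuous σ) (hρ₀ : ρ 0 = 0)
    (hσ₀ : σ 0 = 0) (hρ_pos : ∀ r, 0 < r → 0 < ρ r) (hσ_pos : ∀ r, 0 < r → 0 < σ r)
    (hρσ : ∀ r, 0 < r → ρ (σ r) = r) (hσρ : ∀ r, 0 < r → σ (ρ r) = r) :
    IsHomeomorph (radialMap ρ) :=
  (Homeomorph.mk ⟨radialMap ρ, radialMap σ, radialMap_leftInverse hρ_pos hσρ,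
    radialMap_leftInverse hσ_pos hρσ⟩ (continuous_radialMap hρ hρ₀)
    (continuous_radialMap hσ hσ₀)).isHomeomorph

end Homeomorphism

theorem Mf_radialMap {ρ : ℝ → ℝ} {R : ℝ} (hR : 0 < R) : Mf (radialMap ρ) 0 R = |ρ R| := by
  have himage : (fun z => ‖radialMap ρ z - radialMap ρ 0‖) '' sphere 0 R = {|ρ R|} := by
    refine ((NormedSpace.sphere_nonempty.mpr hR.le).image _).subset_singleton_iff.mp ?_
    rintro _ ⟨z, hz, rfl⟩
    have hzR : ‖z‖ = R := mem_sphere_zero_iff_norm.mp hz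
    have hz0 : z ≠ 0 := norm_pos_iff.mp (hzR ▸ hR)
    simp only [radialMap_zero, sub_zero, norm_radialMap hz0, hzR, Set.mem_singleton_iff]
  rw [Mf, himage, csSup_singleton]

theorem norm_ofReal_mul_exp_mul_I {r : ℝ} (hr : 0 ≤ r) (θ : ℝ) :
    ‖(r : ℂ) * Complex.exp (θ * Complex.I)‖ = r := by
  rw [norm_mul, Complex.norm_exp_ofReal_mul_I, mul_one, Complex.norm_real, Real.norm_of_nonneg hr]

theorem kappa_of_norm_eq {K : ℂ → ℂ} {z₀ : ℂ} {r a : ℝ}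
    (h : ∀ θ : ℝ, ‖K (z₀ + r * Complex.exp (θ * Complex.I))‖ = a) : kappa K z₀ r = a ^ 2 := by
  simp only [kappa, h, intervalIntegral.integral_const, sub_zero, smul_eq_mul]
  field_simp [Real.pi_ne_zero]

theorem ae_norm_ne (R : ℝ) : ∀ᵐ z : ℂ, ‖z‖ ≠ R := by
  have h : {z : ℂ | ‖z‖ = R} = sphere 0 R := by ext; simp
  simpa [ae_iff, h] using Measure.addHaar_sphere (volume : Measure ℂ) 0 R

def stretch (α r : ℝ) : ℝ :=
  if Real.exp (Real.exp 1) ≤ r then Real.log (Real.log r) ^ (1 / α) else Real.exp (-Real.exp 1) * r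

def stretchInv (α s : ℝ) : ℝ :=
  if 1 ≤ s then Real.exp (Real.exp (s ^ α)) else Real.exp (Real.exp 1) * s

def beltramiCoeff (α : ℝ) (z : ℂ) : ℂ :=
  if Real.exp (Real.exp 1) ≤ ‖z‖
    then -((Real.sqrt α * Real.sqrt (Real.log (‖z‖)) *
        Real.sqrt (Real.log (Real.log (‖z‖))) : ℝ) : ℂ) * (z / (starRingEnd ℂ) z)
    else -(z / (starRingEnd ℂ) z)

section Stretch

variable {α r : ℝ}

theorem exp_one_le_log (hr : Real.exp (Real.exp 1) ≤ r) : Real.exp 1 ≤ Real.log r := by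
  rwa [Real.le_log_iff_exp_le ((Real.exp_pos _).trans_le hr)]

theorem one_le_log_log (hr : Real.exp (Real.exp 1) ≤ r) : 1 ≤ Real.log (Real.log r) := by
  rw [Real.le_log_iff_exp_le ((Real.exp_pos _).trans_le (exp_one_le_log hr))]
  exact exp_one_le_log hr

theorem exp_neg_exp_one_mul_exp_exp_one : Real.exp (-Real.exp 1) * Real.exp (Real.exp 1) = 1 := by
  rw [← Real.exp_add, neg_add_cancel, Real.exp_zero]

theorem stretch_of_le (hr : Real.exp (Real.exp 1) ≤ r) :
    stretch α r = Real.log (Real.log r) ^ (1 / α) := if_pos hr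

theorem stretch_of_lt (hr : r < Real.exp (Real.exp 1)) : stretch α r = Real.exp (-Real.exp 1) * r :=
  if_neg hr.not_ge

theorem radialMap_stretch (α : ℝ) :
    radialMap (stretch α) = fun z => if Real.exp (Real.exp 1) ≤ ‖z‖
      then ((Real.log (Real.log (‖z‖)) ^ (1 / α) : ℝ) : ℂ) * (z / (‖z‖ : ℂ))
      else ((Real.exp (-Real.exp 1) : ℝ) : ℂ) * z := by
  ext z
  rcases eq_or_ne z 0 with rfl | hz
  · simp [radialMap_zero, (Real.exp_pos _).not_ge]
  have hr : (‖z‖ : ℂ) ≠ 0 := by exact_mod_cast norm_ne_zero_iff.mpr hz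
  unfold radialMap stretch
  split_ifs <;> push_cast <;> field_simp

theorem continuous_stretch (α : ℝ) : Continuous (stretch α) := by
  refine continuous_if_le continuous_const continuous_id ?_ (by fun_prop) fun r hr => ?_
  · intro r (hr : Real.exp (Real.exp 1) ≤ r)
    have hlog := (Real.exp_pos _).trans_le (exp_one_le_log hr)
    exact ((continuousAt_id.log ((Real.exp_pos _).trans_le hr).ne').log hlog.ne').rpow_const
      (Or.inl (zero_lt_one.trans_le (one_le_log_log hr)).ne') |>.continuousWithinAt
  · simp [← hr, exp_neg_exp_one_mul_exp_exp_one]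

theorem continuous_stretchInv (α : ℝ) : Continuous (stretchInv α) := by
  refine continuous_if_le continuous_const continuous_id ?_ (by fun_prop) fun s hs => ?_
  · intro s (hs : 1 ≤ s)
    exact (continuousAt_id.rpow_const (Or.inl (zero_lt_one.trans_le hs).ne')).rexp.rexp
      |>.continuousWithinAt
  · simp [← hs]

theorem stretch_pos (hr : 0 < r) : 0 < stretch α r := by
  unfold stretch
  split_ifs with h
  · exact Real.rpow_pos_of_pos (zero_lt_one.trans_le (one_le_log_log h)) _
  · positivity

theorem stretchInv_pos (hr : 0 < r) : 0 < stretchInv α r := by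
  unfold stretchInv
  split_ifs <;> positivity

theorem stretch_stretchInv (hα : 0 < α) (hr : 0 < r) : stretch α (stretchInv α r) = r := by
  unfold stretchInv
  split_ifs with h
  · rw [stretch_of_le (Real.exp_le_exp.mpr (Real.exp_le_exp.mpr (Real.one_le_rpow h hα.le))),
      Real.log_exp, Real.log_exp, ← Real.rpow_mul hr.le, mul_one_div_cancel hα.ne', Real.rpow_one]
  · rw [stretch_of_lt (by nlinarith [Real.exp_pos (Real.exp 1)]), ← mul_assoc,
      exp_neg_exp_one_mul_exp_exp_one, one_mul]

theorem stretchInv_stretch (hα : 0 < α) (hr : 0 < r) : stretchInv α (stretch α r) = r := by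
  unfold stretch
  split_ifs with h
  · have hL := zero_lt_one.trans_le (one_le_log_log h)
    rw [stretchInv, if_pos (Real.one_le_rpow (one_le_log_log h) (by positivity)),
      ← Real.rpow_mul hL.le, one_div_mul_cancel hα.ne', Real.rpow_one,
      Real.exp_log ((Real.exp_pos _).trans_le (exp_one_le_log h)), Real.exp_log hr]
  · have h1 : Real.exp (-Real.exp 1) * r < 1 := by
      nlinarith [Real.exp_pos (-Real.exp 1), exp_neg_exp_one_mul_exp_exp_one]
    rw [stretchInv, if_neg h1.not_ge, ← mul_assoc, mul_comm (Real.exp _),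
      exp_neg_exp_one_mul_exp_exp_one, one_mul]

theorem isHomeomorph_radialMap_stretch (hα : 0 < α) : IsHomeomorph (radialMap (stretch α)) :=
  isHomeomorph_radialMap (continuous_stretch α) (continuous_stretchInv α)
    (by simp [stretch, (Real.exp_pos _).not_ge]) (by simp [stretchInv])
    (fun _ => stretch_pos) (fun _ => stretchInv_pos) (fun _ => stretch_stretchInv hα)
    (fun _ => stretchInv_stretch hα)

theorem hasDerivAt_stretch_of_gt (hr : Real.exp (Real.exp 1) < r) :
    HasDerivAt (stretch α)
      (α⁻¹ * Real.log (Real.log r) ^ (1 / α - 1) / (r * Real.log r)) r := by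
  have hr0 : 0 < r := (Real.exp_pos _).trans hr
  have hlog : 0 < Real.log r := (Real.exp_pos _).trans_le (exp_one_le_log hr.le)
  have hL : 0 < Real.log (Real.log r) := zero_lt_one.trans_le (one_le_log_log hr.le)
  have h := (((Real.hasDerivAt_log hr0.ne').log hlog.ne').rpow_const (p := 1 / α) (Or.inl hL.ne'))
  refine (h.congr_deriv (by field_simp)).congr_of_eventuallyEq ?_
  filter_upwards [Ioi_mem_nhds hr] with s hs using stretch_of_le (le_of_lt hs)

theorem hasDerivAt_stretch_of_lt (hr : r < Real.exp (Real.exp 1)) :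
    HasDerivAt (stretch α) (Real.exp (-Real.exp 1)) r := by
  refine ((hasDerivAt_id r).const_mul _ |>.congr_deriv (mul_one _)).congr_of_eventuallyEq ?_
  filter_upwards [Iio_mem_nhds hr] with s hs using stretch_of_lt hs

end Stretch

section StretchMap

variable {α : ℝ} {z : ℂ}

theorem jac_radialMap_stretch_of_gt (hα : α ≠ 0) (hz : Real.exp (Real.exp 1) < ‖z‖) :
    jac (radialMap (stretch α)) z = α⁻¹ * Real.log (Real.log ‖z‖) ^ ((2 - α) / α)
      * (Real.log ‖z‖)⁻¹ * (‖z‖ ^ 2)⁻¹ := by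
  have hr : 0 < ‖z‖ := (Real.exp_pos _).trans hz
  have hlog : 0 < Real.log ‖z‖ := (Real.exp_pos _).trans_le (exp_one_le_log hz.le)
  have hL : 0 < Real.log (Real.log ‖z‖) := zero_lt_one.trans_le (one_le_log_log hz.le)
  have hexp : (2 - α) / α = 1 / α + 1 / α - 1 := by field_simp; ring
  rw [jac_radialMap (hasDerivAt_stretch_of_gt hz) (norm_pos_iff.mp hr), stretch_of_le hz.le,
    hexp, Real.rpow_sub_one hL.ne' (1 / α + 1 / α), Real.rpow_add hL,
    Real.rpow_sub_one hL.ne' (1 / α)]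
  field_simp

theorem jac_radialMap_stretch_of_lt (hz₀ : z ≠ 0) (hz : ‖z‖ < Real.exp (Real.exp 1)) :
    jac (radialMap (stretch α)) z = Real.exp (-Real.exp 1) ^ 2 := by
  rw [jac_radialMap (hasDerivAt_stretch_of_lt hz) hz₀, stretch_of_lt hz]
  field_simp [norm_ne_zero_iff.mpr hz₀]

theorem beltramiEq_stretch_of_gt (hα : 0 < α) (hz : Real.exp (Real.exp 1) < ‖z‖) :
    beltramiEq 0 (beltramiCoeff α) (radialMap (stretch α)) z := by
  set r := ‖z‖ with hr_def
  have hr : 0 < r := (Real.exp_pos _).trans hz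
  have hlog : 0 < Real.log r := (Real.exp_pos _).trans_le (exp_one_le_log hz.le)
  have hL : 0 < Real.log (Real.log r) := zero_lt_one.trans_le (one_le_log_log hz.le)
  have hz₀ : z ≠ 0 := norm_pos_iff.mp hr
  have hρ := hasDerivAt_stretch_of_gt (α := α) hz
  have hcoeff : Real.sqrt α * Real.sqrt (Real.log r) * Real.sqrt (Real.log (Real.log r))
      * Real.sqrt |jac (radialMap (stretch α)) z| = stretch α r / r := by
    rw [jac_radialMap hρ hz₀, ← hr_def, stretch_of_le hz.le, abs_of_pos (by positivity),
      ← Real.sqrt_mul hα.le, ← Real.sqrt_mul (by positivity), ← Real.sqrt_mul (by positivity),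
      Real.sqrt_eq_iff_mul_self_eq (by positivity) (by positivity), Real.rpow_sub_one hL.ne']
    field_simp
  rw [beltramiEq, sub_zero, wDzbar_sub_mul_wDz_radialMap hρ hz₀, beltramiCoeff, if_pos hz.le,
    ← hr_def, ← hcoeff]
  push_cast
  ring

theorem beltramiEq_stretch_of_lt (hz₀ : z ≠ 0) (hz : ‖z‖ < Real.exp (Real.exp 1)) :
    beltramiEq 0 (beltramiCoeff α) (radialMap (stretch α)) z := by
  have hρ := hasDerivAt_stretch_of_lt (α := α) hz
  rw [beltramiEq, sub_zero, wDzbar_sub_mul_wDz_radialMap hρ hz₀, beltramiCoeff,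
    if_neg hz.not_ge, jac_radialMap_stretch_of_lt hz₀ hz, abs_of_pos (by positivity),
    Real.sqrt_sq (Real.exp_pos _).le, stretch_of_lt hz,
    mul_div_cancel_right₀ _ (norm_ne_zero_iff.mpr hz₀)]
  ring

end StretchMap

theorem norm_beltramiCoeff_of_le {α : ℝ} {z : ℂ} (hz : Real.exp (Real.exp 1) ≤ ‖z‖) :
    ‖beltramiCoeff α z‖
      = Real.sqrt α * Real.sqrt (Real.log ‖z‖) * Real.sqrt (Real.log (Real.log ‖z‖)) := by
  have hz₀ : z ≠ 0 := norm_pos_iff.mp ((Real.exp_pos _).trans_le hz)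
  rw [beltramiCoeff, if_pos hz, norm_mul, norm_neg, norm_div_conj_self hz₀, mul_one,
    Complex.norm_real, Real.norm_of_nonneg (by positivity)]

theorem kappa_beltramiCoeff {α r : ℝ} (hα : 0 ≤ α) (hr : Real.exp (Real.exp 1) ≤ r) :
    kappa (beltramiCoeff α) 0 r = α * Real.log r * Real.log (Real.log r) := by
  have hr₀ : 0 < r := (Real.exp_pos _).trans_le hr
  have hlog : 0 < Real.log r := (Real.exp_pos _).trans_le (exp_one_le_log hr)
  have hL : 0 < Real.log (Real.log r) := zero_lt_one.trans_le (one_le_log_log hr)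
  have hnorm := norm_ofReal_mul_exp_mul_I hr₀.le
  have hK (θ : ℝ) : ‖beltramiCoeff α (0 + r * Complex.exp (θ * Complex.I))‖
      = Real.sqrt α * Real.sqrt (Real.log r) * Real.sqrt (Real.log (Real.log r)) := by
    rw [zero_add, norm_beltramiCoeff_of_le ((hnorm θ).symm ▸ hr), hnorm θ]
  rw [kappa_of_norm_eq hK, mul_pow, mul_pow, Real.sq_sqrt hα, Real.sq_sqrt hlog.le,
    Real.sq_sqrt hL.le]

theorem Mf_radialMap_stretch {α R : ℝ} (hR : Real.exp (Real.exp 1) ≤ R) :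
    Mf (radialMap (stretch α)) 0 R = Real.log (Real.log R) ^ (1 / α) := by
  rw [Mf_radialMap ((Real.exp_pos _).trans_le hR), stretch_of_le hR,
    abs_of_nonneg (Real.rpow_nonneg (zero_le_one.trans (one_le_log_log hR)) _)]

theorem tendsto_kappa_beltramiCoeff_div_log {α : ℝ} (hα : 0 < α) :
    Tendsto (fun r => kappa (beltramiCoeff α) 0 r / Real.log r) atTop atTop := by
  refine ((Real.tendsto_log_atTop.comp Real.tendsto_log_atTop).const_mul_atTop hα).congr' ?_
  filter_upwards [eventually_ge_atTop (Real.exp (Real.exp 1))] with r hr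
  have hlog : 0 < Real.log r := (Real.exp_pos _).trans_le (exp_one_le_log hr)
  rw [Function.comp_apply, kappa_beltramiCoeff hα.le hr]
  field_simp

theorem tendsto_Mf_radialMap_stretch_div {α : ℝ} (hα : 0 < α) :
    Tendsto (fun R => Mf (radialMap (stretch α)) 0 R / Real.log R ^ (1 / α)) atTop (nhds 0) := by
  have hlim : Tendsto (fun R => Real.log (Real.log R) / Real.log R) atTop (nhds 0) :=
    Real.isLittleO_log_id_atTop.tendsto_div_nhds_zero.comp Real.tendsto_log_atTop
  have hpow : Tendsto (fun x : ℝ => x ^ (1 / α)) (nhds 0) (nhds 0) := by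
    have h := (Real.continuousAt_rpow_const 0 (1 / α) (Or.inr (by positivity))).tendsto
    rwa [Real.zero_rpow (by positivity)] at h
  refine (hpow.comp hlim).congr' ?_
  filter_upwards [eventually_ge_atTop (Real.exp (Real.exp 1))] with R hR
  have hlog : 0 < Real.log R := (Real.exp_pos _).trans_le (exp_one_le_log hR)
  rw [Function.comp_apply, Mf_radialMap_stretch hR,
    Real.div_rpow (zero_le_one.trans (one_le_log_log hR)) hlog.le]

/-- For `α > 0`, the map `f(z) = (ln ln |z|)^{1/α} z/|z|` for `|z| ≥ e^e`,
`f(z) = e^{-e} z` for `|z| < e^e`, is a homeomorphism of `ℂ` onto `ℂ`, differentiable a.e.,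
with `J_f(r e^{iθ}) = α⁻¹ (ln ln r)^{(2-α)/α} (ln r)⁻¹ r⁻² > 0` for `r > e^e`; it solves a.e.
the equation `f_z̄ - (z/z̄) f_z = K(z) |J_f|^{1/2}` with the indicated `K`; moreover
`κ(0,r) = α ln r · ln ln r` for `r ≥ e^e`, so `κ(0,r)/ln r → ∞`, while
`M_f(0,R) = (ln ln R)^{1/α}` (for `R ≥ e^e`), hence `M_f(0,R)/(ln R)^{1/α} → 0`. -/
theorem stmt_18 (α : ℝ) (hα : 0 < α) (f K : ℂ → ℂ)
    (hfdef : f = fun z => if Real.exp (Real.exp 1) ≤ ‖z‖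
      then ((Real.log (Real.log (‖z‖)) ^ (1 / α) : ℝ) : ℂ) * (z / (‖z‖ : ℂ))
      else ((Real.exp (-Real.exp 1) : ℝ) : ℂ) * z)
    (hKdef : K = fun z => if Real.exp (Real.exp 1) ≤ ‖z‖
      then -((Real.sqrt α * Real.sqrt (Real.log (‖z‖)) *
          Real.sqrt (Real.log (Real.log (‖z‖))) : ℝ) : ℂ) * (z / (starRingEnd ℂ) z)
      else -(z / (starRingEnd ℂ) z)) :
    IsHomeomorph f ∧
    (∀ᵐ z ∂(volume : Measure ℂ), DifferentiableAt ℝ f z) ∧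
    (∀ r θ : ℝ, Real.exp (Real.exp 1) < r →
      jac f ((r : ℂ) * Complex.exp ((θ : ℂ) * Complex.I))
          = α⁻¹ * Real.log (Real.log r) ^ ((2 - α) / α) * (Real.log r)⁻¹ * (r ^ 2)⁻¹ ∧
      0 < jac f ((r : ℂ) * Complex.exp ((θ : ℂ) * Complex.I))) ∧
    (∀ᵐ z ∂(volume : Measure ℂ), beltramiEq 0 K f z) ∧
    (∀ r : ℝ, Real.exp (Real.exp 1) ≤ r →
      kappa K 0 r = α * Real.log r * Real.log (Real.log r)) ∧
    Tendsto (fun r : ℝ => kappa K 0 r / Real.log r) atTop atTop ∧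
    (∀ R : ℝ, Real.exp (Real.exp 1) ≤ R → Mf f 0 R = Real.log (Real.log R) ^ (1 / α)) ∧
    Tendsto (fun R : ℝ => Mf f 0 R / (Real.log R) ^ (1 / α)) atTop (nhds 0) := by
  obtain rfl : f = radialMap (stretch α) := hfdef.trans (radialMap_stretch α).symm
  obtain rfl : K = beltramiCoeff α := hKdef
  have hgeneric : ∀ᵐ z : ℂ, z ≠ 0 ∧ ‖z‖ ≠ Real.exp (Real.exp 1) := by
    filter_upwards [ae_norm_ne 0, ae_norm_ne _] with z h₀ h₁ using ⟨norm_ne_zero_iff.mp h₀, h₁⟩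
  refine ⟨isHomeomorph_radialMap_stretch hα, ?_, fun r θ hr => ?_, ?_,
    fun r => kappa_beltramiCoeff hα.le, tendsto_kappa_beltramiCoeff_div_log hα,
    fun R => Mf_radialMap_stretch, tendsto_Mf_radialMap_stretch_div hα⟩
  · filter_upwards [hgeneric] with z ⟨hz₀, hz⟩
    rcases hz.lt_or_gt with hlt | hgt
    · exact (hasFDerivAt_radialMap (hasDerivAt_stretch_of_lt hlt) hz₀).differentiableAt
    · exact (hasFDerivAt_radialMap (hasDerivAt_stretch_of_gt hgt) hz₀).differentiableAt
  · have hr₀ : 0 < r := (Real.exp_pos _).trans hr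
    have hnorm := norm_ofReal_mul_exp_mul_I hr₀.le θ
    rw [jac_radialMap_stretch_of_gt hα.ne' (by rwa [hnorm]), hnorm]
    have hlog : 0 < Real.log r := (Real.exp_pos _).trans_le (exp_one_le_log hr.le)
    have hL := Real.rpow_pos_of_pos (zero_lt_one.trans_le (one_le_log_log hr.le)) ((2 - α) / α)
    exact ⟨rfl, mul_pos (mul_pos (mul_pos (inv_pos.2 hα) hL) (inv_pos.2 hlog))
      (inv_pos.2 (pow_pos hr₀ 2))⟩
  · filter_upwards [hgeneric] with z ⟨hz₀, hz⟩
    rcases hz.lt_or_gt with hlt | hgt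
    · exact beltramiEq_stretch_of_lt hz₀ hlt
    · exact beltramiEq_stretch_of_gt hα hgt
end
end

section
/- The map f: ℂ → ℂ with f(z) = z·e^{2i·ln|z|} for z ≠ 0 and f(0) = 0 satisfies, for all z ≠ 0: f_z = (1+i)·e^{2i·ln|z|}, f_z̄ = (iz/z̄)·e^{2i·ln|z|}, hence J_f(z) = |f_z|² − |f_z̄|² = 1, and f solves the equation f_z̄ − (z/z̄)·f_z = K(z)·|J_f(z)|^{1/2} with K(z) = −(z/z̄)·e^{2i·ln|z|}. -/
open MeasureTheory Filter Metric

noncomputable section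

/-! Since `log (z z̄) = 2 log |z|`, the map is `f z = z · exp (i log (z z̄))` everywhere (at `0`
both sides vanish). Away from `0` its real differential therefore follows from the product rule
and the chain rule with the holomorphic outer function `u ↦ exp (i log u)`, kept in the form
`w ↦ a w + b w̄`, whose coefficients are `a = f_z` and `b = f_z̄`. This gives
`f_z = (1 + i) e` and `f_z̄ = (i z / z̄) e` with `|e| = 1`, hence `J_f = 2 - 1 = 1`. -/

open Complex ComplexConjugate

def HasWirtingerDerivAt (f : ℂ → ℂ) (a b z : ℂ) : Prop :=
  HasFDerivAt f (a • ContinuousLinearMap.id ℝ ℂ + b • (conjCLE : ℂ →L[ℝ] ℂ)) z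

namespace HasWirtingerDerivAt

variable {f g : ℂ → ℂ} {a b c d z : ℂ}

theorem fderiv_apply (h : HasWirtingerDerivAt f a b z) (w : ℂ) :
    fderiv ℝ f z w = a * w + b * conj w := by
  simp [h.fderiv]

theorem wDz_eq (h : HasWirtingerDerivAt f a b z) : wDz f z = a := by
  rw [wDz, h.fderiv_apply, h.fderiv_apply, map_one, conj_I]
  linear_combination (b - a) / 2 * I_sq

theorem wDzbar_eq (h : HasWirtingerDerivAt f a b z) : wDzbar f z = b := by
  rw [wDzbar, h.fderiv_apply, h.fderiv_apply, map_one, conj_I]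
  linear_combination (a - b) / 2 * I_sq

theorem mul (hf : HasWirtingerDerivAt f a b z) (hg : HasWirtingerDerivAt g c d z) :
    HasWirtingerDerivAt (fun w => f w * g w) (a * g z + f z * c) (b * g z + f z * d) z := by
  refine (HasFDerivAt.mul hf hg).congr_fderiv ?_
  ext1 w
  simp only [add_apply, smul_apply, ContinuousLinearMap.id_apply,
    ContinuousLinearEquiv.coe_coe, conjCLE_apply, smul_eq_mul]
  ring

theorem _root_.HasDerivAt.comp_hasWirtingerDerivAt {φ : ℂ → ℂ} {φ' : ℂ}
    (hφ : HasDerivAt φ φ' (f z)) (hf : HasWirtingerDerivAt f a b z) :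
    HasWirtingerDerivAt (fun w => φ (f w)) (φ' * a) (φ' * b) z := by
  refine (hφ.comp_hasFDerivAt z hf).congr_fderiv ?_
  rw [smul_add, smul_smul, smul_smul]

theorem jac_eq (h : HasWirtingerDerivAt f a b z) : jac f z = ‖a‖ ^ 2 - ‖b‖ ^ 2 := by
  rw [jac, h.wDz_eq, h.wDzbar_eq]

end HasWirtingerDerivAt

theorem hasWirtingerDerivAt_id (z : ℂ) : HasWirtingerDerivAt (fun w => w) 1 0 z := by
  refine (hasFDerivAt_id z).congr_fderiv ?_
  ext1 w
  simp

theorem hasWirtingerDerivAt_conj (z : ℂ) : HasWirtingerDerivAt conj 0 1 z := by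
  refine (conjCLE : ℂ →L[ℝ] ℂ).hasFDerivAt.congr_fderiv ?_
  ext1 w
  simp

theorem log_mul_conj (w : ℂ) : log (w * conj w) = 2 * (Real.log ‖w‖ : ℂ) := by
  rw [mul_conj, ← ofReal_log (normSq_nonneg w), normSq_eq_norm_sq, Real.log_pow]
  push_cast
  ring

theorem hasWirtingerDerivAt_mul_conj (z : ℂ) :
    HasWirtingerDerivAt (fun w => w * conj w) (conj z) z z := by
  convert (hasWirtingerDerivAt_id z).mul (hasWirtingerDerivAt_conj z) using 1 <;> simp

theorem hasWirtingerDerivAt_mul_exp_I_log_mul_conj {z : ℂ} (hz : z ≠ 0) :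
    HasWirtingerDerivAt (fun w => w * exp (I * log (w * conj w)))
      ((1 + I) * exp (2 * I * Real.log ‖z‖)) (I * z / conj z * exp (2 * I * Real.log ‖z‖)) z := by
  have hslit : z * conj z ∈ slitPlane := by
    rw [mul_conj]
    exact ofReal_mem_slitPlane.2 (normSq_pos.2 hz)
  have hzc : conj z ≠ 0 := by simpa using hz
  have hφ : HasDerivAt (fun u => exp (I * log u))
      (exp (I * log (z * conj z)) * (I * (z * conj z)⁻¹)) (z * conj z) :=
    ((hasDerivAt_log hslit).const_mul I).cexp
  convert (hasWirtingerDerivAt_id z).mul (hφ.comp_hasWirtingerDerivAt (f := fun w => w * conj w)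
    (hasWirtingerDerivAt_mul_conj z)) using 1
  · rw [log_mul_conj]
    field_simp
  · rw [log_mul_conj]
    field_simp
    ring

theorem norm_exp_two_mul_I_mul_ofReal (x : ℝ) : ‖exp (2 * I * x)‖ = 1 := by
  rw [show 2 * I * x = ((2 * x : ℝ) : ℂ) * I by push_cast; ring, norm_exp_ofReal_mul_I]

theorem ite_mul_exp_eq_mul_exp_I_log_mul_conj :
    (fun z : ℂ => if z = 0 then 0 else z * exp (2 * I * (Real.log ‖z‖ : ℂ)))
      = fun w => w * exp (I * log (w * conj w)) := by
  ext1 w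
  split_ifs with hw
  · simp [hw]
  · rw [log_mul_conj, mul_left_comm I, mul_assoc]

/-- The map `f(z) = z e^{2i ln |z|}` (with `f 0 = 0`) satisfies, for all
`z ≠ 0`: `f_z = (1+i) e^{2i ln |z|}`, `f_z̄ = (iz/z̄) e^{2i ln |z|}`, hence `J_f(z) = 1`, and
`f` solves `f_z̄ - (z/z̄) f_z = K(z) |J_f(z)|^{1/2}` with `K(z) = -(z/z̄) e^{2i ln |z|}`. -/
theorem stmt_19 (f : ℂ → ℂ)
    (hf : f = fun z => if z = 0 then 0
      else z * Complex.exp (2 * Complex.I * (Real.log (‖z‖) : ℂ))) :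
    ∀ z : ℂ, z ≠ 0 →
      wDz f z = (1 + Complex.I) * Complex.exp (2 * Complex.I * (Real.log (‖z‖) : ℂ)) ∧
      wDzbar f z
        = Complex.I * z / (starRingEnd ℂ) z
            * Complex.exp (2 * Complex.I * (Real.log (‖z‖) : ℂ)) ∧
      jac f z = 1 ∧
      wDzbar f z - (z / (starRingEnd ℂ) z) * wDz f z
        = (-(z / (starRingEnd ℂ) z)
              * Complex.exp (2 * Complex.I * (Real.log (‖z‖) : ℂ)))
            * (Real.sqrt |jac f z| : ℂ) := by
  intro z hz
  have hW := hasWirtingerDerivAt_mul_exp_I_log_mul_conj hz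
  rw [← ite_mul_exp_eq_mul_exp_I_log_mul_conj, ← hf] at hW
  have hjac : jac f z = 1 := by
    have hz' : ‖z‖ ≠ 0 := norm_ne_zero_iff.2 hz
    have h1I : ‖1 + I‖ ^ 2 = 2 := by rw [Complex.sq_norm]; norm_num [normSq_apply]
    rw [hW.jac_eq, norm_mul, norm_mul, norm_div, norm_mul, norm_exp_two_mul_I_mul_ofReal, norm_I,
      norm_conj, mul_one, mul_one, one_mul, div_self hz', h1I]
    norm_num
  refine ⟨hW.wDz_eq, hW.wDzbar_eq, hjac, ?_⟩
  rw [hW.wDz_eq, hW.wDzbar_eq, hjac, abs_one, Real.sqrt_one, ofReal_one, mul_one]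
  ring
end
end
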